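/- Let k ≥ 2 be an integer, n := k−1, K(x,y) := (min(x,y)/max(x,y))^{n/2} on [0,1]² (with K(0,0) := 0), and T the integral operator (Tf)(x) := ∫₀¹ f(y) K(x,y) dy on L²[0,1]. Let λ > 0 and suppose q : (0,1] → ℝ is a twice continuously differentiable, not identically zero solution of q''(x) + (n/x) q'(x) + ((n/λ)/x) q(x) = 0 on (0,1] with q(1) = 0. If the function φ(x) := x^{n/2} q'(x) extends continuously to [0,1] with lim_{x→0+} x^{n/2} q'(x) = 0, then φ ∈ L²[0,1] is an eigenfunction of T with eigenvalue λ, i.e. Tφ = λφ. -/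

import Mathlib

open MeasureTheory Set Filter Topology

/-- The GPY kernel `K(x,y) = (min(x,y)/max(x,y))^(n/2)` (with `K(0,0) = 0`,
which holds automatically by Lean's conventions `0/0 = 0`, `0^(positive) = 0`). -/
noncomputable def gpyKernel (n : ℕ) (x y : ℝ) : ℝ := (min x y / max x y) ^ ((n : ℝ) / 2)

/-- Lebesgue measure restricted to `[0,1]`. -/
noncomputable def mu01 : Measure ℝ := volume.restrict (Set.Icc 0 1)

/-! For `0 < x ≤ 1` the kernel splits the integral at `y = x`:
`∫₀¹ y^{n/2} q'(y) K(x,y) dy = x^{-n/2} ∫₀ˣ y^n q'(y) dy + x^{n/2} ∫ₓ¹ q'(y) dy`.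
The second integral is `-q(x)` since `q(1) = 0`. The ODE says precisely that
`y^n q + λ y^n q'` is a primitive of `y^n q'`, and this primitive vanishes at `0⁺`:
`y^n q' = y^{n/2} φ → 0`, and `y^n q → 0` because boundedness of `φ` gives `|q'(y)| ≤ M y^{-n/2}`,
so `|q(y)| ≤ M y^{-n/2}` after integrating from `y` to `1`. The two pieces add up to
`x^{n/2} q + λ x^{n/2} q' - x^{n/2} q = λ φ(x)`. -/

open Function

section ExtensionByLimit

variable {E : Type*} {f : ℝ → E} {a b : ℝ} {l : E}

lemma continuousOn_update_Icc_of_tendsto [TopologicalSpace E] (hf : ContinuousOn f (Ioc a b))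
    (hl : Tendsto f (𝓝[>] a) (𝓝 l)) : ContinuousOn (update f a l) (Icc a b) := by
  intro x hx
  rcases hx.1.eq_or_lt with rfl | hax
  · rw [continuousWithinAt_update_same]
    exact hl.mono_left (nhdsWithin_mono _ fun y hy => hy.1.1.lt_of_ne' hy.2)
  · have hIoc : Ioc a b ∈ 𝓝[Icc a b] x :=
      mem_of_superset (inter_mem (mem_nhdsWithin_of_mem_nhds (Ioi_mem_nhds hax))
        self_mem_nhdsWithin) fun y hy => ⟨hy.1, hy.2.2⟩
    refine ContinuousWithinAt.mono_of_mem_nhdsWithin ?_ hIoc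
    exact (hf.congr fun y hy => update_of_ne hy.1.ne' ..) x ⟨hax, hx.2⟩

lemma exists_norm_le_of_continuousOn_Ioc_of_tendsto [SeminormedAddGroup E]
    (hf : ContinuousOn f (Ioc a b)) (hl : Tendsto f (𝓝[>] a) (𝓝 l)) :
    ∃ M, ∀ x ∈ Ioc a b, ‖f x‖ ≤ M := by
  obtain ⟨M, hM⟩ :=
    isCompact_Icc.exists_bound_of_continuousOn (continuousOn_update_Icc_of_tendsto hf hl)
  exact ⟨M, fun x hx => by simpa [update_of_ne hx.1.ne'] using hM x (Ioc_subset_Icc_self hx)⟩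

variable [NormedAddCommGroup E]

lemma memLp_restrict_Ioc_of_continuousOn_of_tendsto {p : ENNReal}
    (hf : ContinuousOn f (Ioc a b)) (hl : Tendsto f (𝓝[>] a) (𝓝 l)) :
    MemLp f p (volume.restrict (Ioc a b)) := by
  obtain ⟨M, hM⟩ := exists_norm_le_of_continuousOn_Ioc_of_tendsto hf hl
  exact MemLp.of_bound (hf.aestronglyMeasurable measurableSet_Ioc) M
    ((ae_restrict_iff' measurableSet_Ioc).2 (ae_of_all _ hM))

lemma integrableOn_Ioc_of_continuousOn_of_tendsto
    (hf : ContinuousOn f (Ioc a b)) (hl : Tendsto f (𝓝[>] a) (𝓝 l)) :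
    IntegrableOn f (Ioc a b) :=
  memLp_one_iff_integrable.1 (memLp_restrict_Ioc_of_continuousOn_of_tendsto hf hl)

lemma ContinuousOn.integrableOn_Ioc_of_mem {x : ℝ} (hf : ContinuousOn f (Ioc a b))
    (hx : x ∈ Ioc a b) : IntegrableOn f (Ioc x b) :=
  ((hf.mono fun _ hy => ⟨hx.1.trans_le hy.1, hy.2⟩).integrableOn_Icc).mono_set
    Ioc_subset_Icc_self

variable [NormedSpace ℝ E] [CompleteSpace E] {f' : ℝ → E}

lemma integral_Ioc_eq_sub_of_hasDerivWithinAt_of_tendsto (hab : a < b)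
    (hf : ∀ x ∈ Ioc a b, HasDerivWithinAt f (f' x) (Ioc a b) x)
    (hl : Tendsto f (𝓝[>] a) (𝓝 l)) (hf' : IntegrableOn f' (Ioc a b)) :
    ∫ x in Ioc a b, f' x = f b - l := by
  have hcont : ContinuousOn f (Ioc a b) := fun x hx => (hf x hx).continuousWithinAt
  have hderiv : ∀ x ∈ Ioo a b, HasDerivWithinAt (update f a l) (f' x) (Ioi x) x := fun x hx =>
    (((hf x (Ioo_subset_Ioc_self hx)).hasDerivAt (Ioc_mem_nhds hx.1 hx.2)).congr_of_eventuallyEq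
      ((eventually_ne_nhds hx.1.ne').mono fun y hy => update_of_ne hy ..)).hasDerivWithinAt
  rw [← intervalIntegral.integral_of_le hab.le,
    intervalIntegral.integral_eq_sub_of_hasDeriv_right_of_le hab.le
      (continuousOn_update_Icc_of_tendsto hcont hl) hderiv
      ((intervalIntegrable_iff_integrableOn_Ioc_of_le hab.le).2 hf'),
    update_of_ne hab.ne', update_self]

lemma integral_Ioc_eq_sub_of_hasDerivWithinAt {x : ℝ} (hx : x ∈ Ioc a b)
    (hf : ∀ t ∈ Ioc a b, HasDerivWithinAt f (f' t) (Ioc a b) t)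
    (hf' : ContinuousOn f' (Ioc a b)) :
    ∫ t in Ioc x b, f' t = f b - f x := by
  rcases hx.2.eq_or_lt with rfl | hxb
  · simp
  have hsub : Ioc x b ⊆ Ioc a b := Ioc_subset_Ioc_left hx.1.le
  refine integral_Ioc_eq_sub_of_hasDerivWithinAt_of_tendsto hxb
    (fun t ht => (hf t (hsub ht)).mono hsub) ?_ (hf'.integrableOn_Ioc_of_mem hx)
  exact (hf x hx).continuousWithinAt.tendsto.mono_left
    (nhdsWithin_le_of_mem (mem_of_superset (Ioc_mem_nhdsGT hxb) hsub))

end ExtensionByLimit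

section RpowWeights

lemma tendsto_rpow_nhdsGT_zero {c : ℝ} (hc : 0 < c) :
    Tendsto (fun y : ℝ => y ^ c) (𝓝[>] 0) (𝓝 0) := by
  simpa [Real.zero_rpow hc.ne'] using
    ((Real.continuous_rpow_const hc.le).tendsto 0).mono_left nhdsWithin_le_nhds

lemma rpow_half_mul_rpow_half {y : ℝ} (hy : 0 < y) (ν : ℝ) :
    y ^ (ν / 2) * y ^ (ν / 2) = y ^ ν := by
  rw [← Real.rpow_add hy, add_halves]

lemma continuousOn_rpow_const_mul {g : ℝ → ℝ} {b : ℝ} (r : ℝ) (hg : ContinuousOn g (Ioc 0 b)) :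
    ContinuousOn (fun y => y ^ r * g y) (Ioc 0 b) :=
  (continuousOn_id.rpow_const fun _ hy => Or.inl hy.1.ne').mul hg

end RpowWeights

section BesselTypeEquation

variable {ν lam b : ℝ} {q q' q'' : ℝ → ℝ}

lemma hasDerivWithinAt_rpow_mul_add_const_mul_rpow_mul {s : Set ℝ} {t : ℝ} (hlam : lam ≠ 0)
    (ht : 0 < t) (hq : HasDerivWithinAt q (q' t) s t) (hq' : HasDerivWithinAt q' (q'' t) s t)
    (hode : q'' t + ν / t * q' t + ν / lam / t * q t = 0) :
    HasDerivWithinAt (fun y => y ^ ν * q y + lam * (y ^ ν * q' y)) (t ^ ν * q' t) s t := by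
  have hpow : HasDerivWithinAt (fun y : ℝ => y ^ ν) (ν * t ^ (ν - 1)) s t :=
    (Real.hasDerivAt_rpow_const (Or.inl ht.ne')).hasDerivWithinAt
  refine ((hpow.mul hq).add ((hpow.mul hq').const_mul lam)).congr_deriv ?_
  rw [Real.rpow_sub ht, Real.rpow_one, show q'' t = -(ν / t * q' t) - ν / lam / t * q t by
    linear_combination hode]
  field_simp
  ring

lemma tendsto_rpow_mul_nhdsGT_zero_of_norm_rpow_half_mul_le (hν : 0 < ν) (hb : 0 < b) {M : ℝ}
    (hq : ∀ t ∈ Ioc 0 b, HasDerivWithinAt q (q' t) (Ioc 0 b) t)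
    (hq'cont : ContinuousOn q' (Ioc 0 b)) (hqb : q b = 0)
    (hM : ∀ t ∈ Ioc 0 b, ‖t ^ (ν / 2) * q' t‖ ≤ M) :
    Tendsto (fun y => y ^ ν * q y) (𝓝[>] 0) (𝓝 0) := by
  have hbound : ∀ y ∈ Ioo 0 b, ‖y ^ ν * q y‖ ≤ M * (b - y) * y ^ (ν / 2) := by
    intro y hy
    have hy0 : 0 < y ^ (ν / 2) := Real.rpow_pos_of_pos hy.1 _
    have hq'y : ∀ t ∈ Ioc y b, ‖q' t‖ ≤ M / y ^ (ν / 2) := by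
      intro t ht
      rw [le_div_iff₀ hy0]
      calc ‖q' t‖ * y ^ (ν / 2) ≤ ‖q' t‖ * t ^ (ν / 2) := mul_le_mul_of_nonneg_left
            (Real.rpow_le_rpow hy.1.le ht.1.le (half_pos hν).le) (norm_nonneg _)
        _ = ‖t ^ (ν / 2) * q' t‖ := by
            rw [norm_mul, Real.norm_of_nonneg (Real.rpow_nonneg (hy.1.trans ht.1).le _), mul_comm]
        _ ≤ M := hM t ⟨hy.1.trans ht.1, ht.2⟩
    have hqy : ‖q y‖ ≤ M / y ^ (ν / 2) * (b - y) := by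
      have hint := integral_Ioc_eq_sub_of_hasDerivWithinAt ⟨hy.1, hy.2.le⟩ hq hq'cont
      rw [hqb, zero_sub] at hint
      simpa [hint, Real.volume_real_Ioc_of_le hy.2.le] using
        norm_setIntegral_le_of_norm_le_const (μ := volume) measure_Ioc_lt_top hq'y
    calc ‖y ^ ν * q y‖ = y ^ (ν / 2) * y ^ (ν / 2) * ‖q y‖ := by
          rw [← rpow_half_mul_rpow_half hy.1, norm_mul, Real.norm_of_nonneg (mul_pos hy0 hy0).le]
      _ ≤ y ^ (ν / 2) * y ^ (ν / 2) * (M / y ^ (ν / 2) * (b - y)) := by gcongr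
      _ = M * (b - y) * y ^ (ν / 2) := by field_simp
  have hlim : Tendsto (fun y => M * (b - y) * y ^ (ν / 2)) (𝓝[>] 0) (𝓝 (M * (b - 0) * 0)) :=
    ((tendsto_const_nhds.sub tendsto_id).mono_left nhdsWithin_le_nhds |>.const_mul M).mul
      (tendsto_rpow_nhdsGT_zero (half_pos hν))
  rw [mul_zero] at hlim
  exact squeeze_zero_norm' (Filter.mem_of_superset (Ioo_mem_nhdsGT hb) hbound) hlim

end BesselTypeEquation

section GpyKernel

variable (n : ℕ) {x b : ℝ}

lemma rpow_half_mul_mul_gpyKernel_of_le {y : ℝ} (v : ℝ) (hy : 0 < y) (hyx : y ≤ x) :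
    y ^ ((n : ℝ) / 2) * v * gpyKernel n x y = (x ^ ((n : ℝ) / 2))⁻¹ * (y ^ (n : ℝ) * v) := by
  rw [gpyKernel, min_eq_right hyx, max_eq_left hyx, Real.div_rpow hy.le (hy.trans_le hyx).le,
    ← rpow_half_mul_rpow_half hy (n : ℝ)]
  ring

lemma rpow_half_mul_mul_gpyKernel_of_ge {y : ℝ} (v : ℝ) (hx : 0 < x) (hxy : x ≤ y) :
    y ^ ((n : ℝ) / 2) * v * gpyKernel n x y = x ^ ((n : ℝ) / 2) * v := by
  have hy : 0 < y ^ ((n : ℝ) / 2) := Real.rpow_pos_of_pos (hx.trans_le hxy) _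
  rw [gpyKernel, min_eq_left hxy, max_eq_right hxy, Real.div_rpow hx.le (hx.trans_le hxy).le]
  field_simp

lemma integral_rpow_half_mul_mul_gpyKernel {f : ℝ → ℝ} (hx : x ∈ Ioc 0 b)
    (h₀ : IntegrableOn (fun y => y ^ (n : ℝ) * f y) (Ioc 0 x)) (h₁ : IntegrableOn f (Ioc x b)) :
    ∫ y in Ioc 0 b, y ^ ((n : ℝ) / 2) * f y * gpyKernel n x y =
      (x ^ ((n : ℝ) / 2))⁻¹ * (∫ y in Ioc 0 x, y ^ (n : ℝ) * f y) +
        x ^ ((n : ℝ) / 2) * ∫ y in Ioc x b, f y := by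
  have hleft : EqOn (fun y => y ^ ((n : ℝ) / 2) * f y * gpyKernel n x y)
      (fun y => (x ^ ((n : ℝ) / 2))⁻¹ * (y ^ (n : ℝ) * f y)) (Ioc 0 x) := fun y hy =>
    rpow_half_mul_mul_gpyKernel_of_le n (f y) hy.1 hy.2
  have hright : EqOn (fun y => y ^ ((n : ℝ) / 2) * f y * gpyKernel n x y)
      (fun y => x ^ ((n : ℝ) / 2) * f y) (Ioc x b) := fun y hy =>
    rpow_half_mul_mul_gpyKernel_of_ge n (f y) hx.1 hy.1.le
  rw [← Ioc_union_Ioc_eq_Ioc hx.1.le hx.2, setIntegral_union (Ioc_disjoint_Ioc_of_le le_rfl)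
      measurableSet_Ioc (IntegrableOn.congr_fun (h₀.const_mul _) hleft.symm measurableSet_Ioc)
      (IntegrableOn.congr_fun (h₁.const_mul _) hright.symm measurableSet_Ioc),
    setIntegral_congr_fun measurableSet_Ioc hleft, setIntegral_congr_fun measurableSet_Ioc hright,
    integral_const_mul, integral_const_mul]

lemma integral_rpow_half_mul_deriv_mul_gpyKernel_of_ode (hn : 0 < n) {lam : ℝ} (hlam : lam ≠ 0)
    {q q' q'' : ℝ → ℝ}
    (hq : ∀ t ∈ Ioc (0 : ℝ) 1, HasDerivWithinAt q (q' t) (Ioc 0 1) t)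
    (hq' : ∀ t ∈ Ioc (0 : ℝ) 1, HasDerivWithinAt q' (q'' t) (Ioc 0 1) t)
    (hq'cont : ContinuousOn q' (Ioc 0 1)) (hq1 : q 1 = 0)
    (hode : ∀ t ∈ Ioc (0 : ℝ) 1, q'' t + (n : ℝ) / t * q' t + (n : ℝ) / lam / t * q t = 0)
    (hlim : Tendsto (fun y => y ^ ((n : ℝ) / 2) * q' y) (𝓝[>] 0) (𝓝 0)) (hx : x ∈ Ioc 0 1) :
    ∫ y in Ioc 0 1, y ^ ((n : ℝ) / 2) * q' y * gpyKernel n x y =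
      lam * (x ^ ((n : ℝ) / 2) * q' x) := by
  have hn' : (0 : ℝ) < n := Nat.cast_pos.2 hn
  have hsub : Ioc 0 x ⊆ Ioc (0 : ℝ) 1 := Ioc_subset_Ioc_right hx.2
  obtain ⟨M, hM⟩ := exists_norm_le_of_continuousOn_Ioc_of_tendsto
    (continuousOn_rpow_const_mul _ hq'cont) hlim
  have hqlim := tendsto_rpow_mul_nhdsGT_zero_of_norm_rpow_half_mul_le hn' one_pos hq hq'cont hq1 hM
  have hq'lim : Tendsto (fun y => y ^ (n : ℝ) * q' y) (𝓝[>] 0) (𝓝 0) := by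
    refine ((tendsto_rpow_nhdsGT_zero (half_pos hn')).mul hlim).congr' ?_ |>.trans (by simp)
    filter_upwards [self_mem_nhdsWithin] with y hy
    rw [← mul_assoc, rpow_half_mul_rpow_half hy]
  have hq'int : IntegrableOn (fun y => y ^ (n : ℝ) * q' y) (Ioc 0 x) :=
    (integrableOn_Ioc_of_continuousOn_of_tendsto (continuousOn_rpow_const_mul _ hq'cont)
      hq'lim).mono_set hsub
  have hprimitive : ∫ y in Ioc 0 x, y ^ (n : ℝ) * q' y =
      x ^ (n : ℝ) * q x + lam * (x ^ (n : ℝ) * q' x) := by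
    rw [integral_Ioc_eq_sub_of_hasDerivWithinAt_of_tendsto hx.1
      (fun t ht => hasDerivWithinAt_rpow_mul_add_const_mul_rpow_mul hlam ht.1
        ((hq t (hsub ht)).mono hsub) ((hq' t (hsub ht)).mono hsub) (hode t (hsub ht)))
      (by simpa using hqlim.add (hq'lim.const_mul lam)) hq'int, sub_zero]
  rw [integral_rpow_half_mul_mul_gpyKernel n hx hq'int (hq'cont.integrableOn_Ioc_of_mem hx),
    hprimitive, integral_Ioc_eq_sub_of_hasDerivWithinAt hx hq hq'cont, hq1,
    ← rpow_half_mul_rpow_half hx.1 (n : ℝ)]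
  have : 0 < x ^ ((n : ℝ) / 2) := Real.rpow_pos_of_pos hx.1 _
  field_simp
  ring

end GpyKernel

theorem gpy_ODE_solution_is_eigenfunction_general (k : ℕ) (hk : 2 ≤ k)
    (lam : ℝ) (hlam : 0 < lam) (q q' q'' : ℝ → ℝ)
    (hq' : ∀ x ∈ Set.Ioc (0:ℝ) 1, HasDerivWithinAt q (q' x) (Set.Ioc 0 1) x)
    (hq'' : ∀ x ∈ Set.Ioc (0:ℝ) 1, HasDerivWithinAt q' (q'' x) (Set.Ioc 0 1) x)
    (hq'cont : ContinuousOn q' (Set.Ioc 0 1))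
    (hq1 : q 1 = 0)
    (hODE : ∀ x ∈ Set.Ioc (0:ℝ) 1,
      q'' x + (((k : ℝ) - 1) / x) * q' x + ((((k : ℝ) - 1) / lam) / x) * q x = 0)
    (φ : ℝ → ℝ) (hφ : ∀ x ∈ Set.Ioc (0:ℝ) 1, φ x = x ^ (((k : ℝ) - 1) / 2) * q' x)
    (hlim : Tendsto (fun x => x ^ (((k : ℝ) - 1) / 2) * q' x) (𝓝[>] (0:ℝ)) (𝓝 0)) :
    MemLp φ 2 mu01 ∧
    ∀ᵐ x ∂mu01,
      (∫ y in Set.Icc (0:ℝ) 1, φ y * gpyKernel (k - 1) x y) = lam * φ x := by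
  have hn : (k : ℝ) - 1 = ((k - 1 : ℕ) : ℝ) := by rw [Nat.cast_sub (by omega), Nat.cast_one]
  rw [hn] at hODE hφ hlim
  have hμ : mu01 = volume.restrict (Ioc 0 1) := Measure.restrict_congr_set Ioc_ae_eq_Icc.symm
  refine ⟨?_, ?_⟩
  · have hφae : φ =ᵐ[mu01] fun y => y ^ (((k - 1 : ℕ) : ℝ) / 2) * q' y := by
      rw [hμ]
      exact (ae_restrict_iff' measurableSet_Ioc).2 (ae_of_all _ hφ)
    rw [memLp_congr_ae hφae, hμ]
    exact memLp_restrict_Ioc_of_continuousOn_of_tendsto (continuousOn_rpow_const_mul _ hq'cont)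
      hlim
  · rw [hμ]
    filter_upwards [ae_restrict_mem measurableSet_Ioc] with x hx
    rw [setIntegral_congr_set Ioc_ae_eq_Icc.symm,
      setIntegral_congr_fun measurableSet_Ioc fun y hy => by rw [hφ y hy], hφ x hx]
    exact integral_rpow_half_mul_deriv_mul_gpyKernel_of_ode (k - 1) (by omega) hlam.ne' hq' hq''
      hq'cont hq1 hODE hlim hx

/-- **converse direction.** Let `k ≥ 2`, `n := k-1`, `λ > 0`, and let `q`
be a twice continuously differentiable, not identically zero solution on `(0,1]` of
`q'' + (n/x) q' + ((n/λ)/x) q = 0` with `q(1) = 0`.  If `φ(x) := x^(n/2) q'(x)` extends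
continuously to `[0,1]` with `x^(n/2) q'(x) → 0` as `x → 0⁺`, then `φ ∈ L²[0,1]` and `φ`
is an eigenfunction of the GPY integral operator with eigenvalue `λ`:
`∫₀¹ φ(y) K(x,y) dy = λ φ(x)` a.e. on `[0,1]`. -/
theorem gpy_ODE_solution_is_eigenfunction (k : ℕ) (hk : 2 ≤ k)
    (lam : ℝ) (hlam : 0 < lam) (q q' q'' : ℝ → ℝ)
    (hq' : ∀ x ∈ Set.Ioc (0:ℝ) 1, HasDerivWithinAt q (q' x) (Set.Ioc 0 1) x)
    (hq'' : ∀ x ∈ Set.Ioc (0:ℝ) 1, HasDerivWithinAt q' (q'' x) (Set.Ioc 0 1) x)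
    (hq'cont : ContinuousOn q' (Set.Ioc 0 1))
    (hq''cont : ContinuousOn q'' (Set.Ioc 0 1))
    (hq1 : q 1 = 0)
    (hqne : ∃ x ∈ Set.Ioc (0:ℝ) 1, q x ≠ 0)
    (hODE : ∀ x ∈ Set.Ioc (0:ℝ) 1,
      q'' x + (((k : ℝ) - 1) / x) * q' x + ((((k : ℝ) - 1) / lam) / x) * q x = 0)
    (φ : ℝ → ℝ) (hφ : ∀ x ∈ Set.Ioc (0:ℝ) 1, φ x = x ^ (((k : ℝ) - 1) / 2) * q' x)
    (hφ0 : φ 0 = 0)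
    (hlim : Tendsto (fun x => x ^ (((k : ℝ) - 1) / 2) * q' x) (𝓝[>] (0:ℝ)) (𝓝 0)) :
    MemLp φ 2 mu01 ∧
    ∀ᵐ x ∂mu01,
      (∫ y in Set.Icc (0:ℝ) 1, φ y * gpyKernel (k - 1) x y) = lam * φ x :=
  gpy_ODE_solution_is_eigenfunction_general k hk lam hlam q q' q'' hq' hq'' hq'cont hq1 hODE φ hφ
    hlim
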